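/- arXiv:1904.05428 — 6 statements merged into one kernel-verified Lean document; each statement's English description precedes it below -/
import Mathlib

section
/- For every real ζ, there exist single-variable real polynomials p2, p3, p4, p5, p6 such that for all real x, y, z: (x^2 y + 2xyz) - ((x+ζ)^2 y + 2(x+ζ)yz) = p2(y-z) + p3(x+z) + p4(x-z) + p5(x+y+\sqrt{2}z) + p6(x+y-\sqrt{2}z). -/
/-!
The difference is `-2ζ (xy + yz) - ζ² y`, and both monomial pieces are combinations of powers of
the five projections: with `u = x + y + √2 z`, `v = x + y - √2 z`,
`4 (xy + yz) = u² + v² - (x + z)² - (x - z)² - 2 (y - z)²` and `2y = u + v - (x + z) - (x - z)`.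
-/

open Polynomial

section Identities

variable {R : Type*} [CommRing R]

theorem phase_sub_phase_shift_eq (ζ x y z : R) :
    (x^2*y + 2*x*y*z) - ((x + ζ)^2*y + 2*(x + ζ)*y*z) = -(2*ζ) * (x*y + y*z) - ζ^2 * y := by
  ring

theorem four_mul_add_eq_sq_projections {s : R} (hs : s ^ 2 = 2) (x y z : R) :
    4 * (x*y + y*z) = (x + y + s*z)^2 + (x + y - s*z)^2 - (x + z)^2 - (x - z)^2 - 2 * (y - z)^2 := by
  linear_combination (-2 * z^2) * hs

theorem two_mul_eq_projections (s x y z : R) :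
    2 * y = (x + y + s*z) + (x + y - s*z) - (x + z) - (x - z) := by
  ring

end Identities

theorem stmt_2 (ζ : ℝ) :
    ∃ p2 p3 p4 p5 p6 : Polynomial ℝ, ∀ x y z : ℝ,
      (x^2*y + 2*x*y*z) - ((x + ζ)^2*y + 2*(x + ζ)*y*z) =
        p2.eval (y - z) + p3.eval (x + z) + p4.eval (x - z)
          + p5.eval (x + y + Real.sqrt 2 * z) + p6.eval (x + y - Real.sqrt 2 * z) := by
  set q : Polynomial ℝ := C (ζ/2) * X^2 + C (ζ^2/2) * X
  refine ⟨C ζ * X^2, q, q, -q, -q, fun x y z => ?_⟩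
  have hquad := four_mul_add_eq_sq_projections (Real.sq_sqrt zero_le_two) x y z
  have hlin := two_mul_eq_projections (Real.sqrt 2) x y z
  simp only [q, eval_add, eval_neg, eval_mul, eval_pow, eval_C, eval_X, phase_sub_phase_shift_eq]
  linear_combination (-ζ/2) * hquad + (-ζ^2/2) * hlin
end

section
/- Let P : ℝ → ℝ be a polynomial of degree at least 3 and let ζ ≠ 0. Then there do NOT exist single-variable real polynomials p2,...,p6 such that for all x,y,z: P(x) - P(x+ζ) = p2(y-z) - p3(x+z) - p4(x-z) - p5(x+y+\sqrt{2}z) - p6(x+y-\sqrt{2}z). -/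
/-!
Every term on the right-hand side is a polynomial in a linear form whose coefficient vector
lies on the light cone `a² + b² = c²`, so the wave operator `∂ₓ² + ∂ᵧ² - ∂_z²` annihilates it.
Applied to the left-hand side it gives `P''(x) - P''(x + ζ)`, so `P''` would be `ζ`-periodic,
hence constant, contradicting `deg P ≥ 3`.
-/

open Polynomial

namespace Polynomial

variable {R : Type*}

theorem derivative_derivative_comp_affine [CommSemiring R] (p : R[X]) (a b : R) :
    derivative (derivative (p.comp (C b + C a * X))) =
      C (a ^ 2) * (derivative (derivative p)).comp (C b + C a * X) := by
  simp only [derivative_comp, derivative_mul, derivative_C, derivative_X, derivative_add,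
    zero_mul, zero_add, mul_one, map_pow]
  ring

theorem sum_mul_sq_eval_derivative_derivative_eq_zero [CommRing R] [IsDomain R] [Infinite R]
    {ι : Type*} (s : Finset ι) (c a b : ι → R) (p : ι → R[X])
    (h : ∀ t, ∑ i ∈ s, c i * (p i).eval (b i + a i * t) = 0) (t : R) :
    ∑ i ∈ s, c i * a i ^ 2 * (derivative (derivative (p i))).eval (b i + a i * t) = 0 := by
  have hF : ∑ i ∈ s, C (c i) * (p i).comp (C (b i) + C (a i) * X) = 0 :=
    Polynomial.funext fun t => by simpa [eval_finsetSum] using h t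
  have := congrArg (fun F => (derivative (derivative F)).eval t) hF
  simpa [derivative_derivative_comp_affine, eval_finsetSum, mul_assoc] using this

theorem eq_C_of_periodic [CommRing R] [IsDomain R] [CharZero R] (p : R[X]) {c : R}
    (hp : Function.Periodic p.eval c) (hc : c ≠ 0) : p = C (p.eval 0) := by
  refine eq_of_infinite_eval_eq _ _
    (Set.infinite_of_injective_forall_mem (f := fun n : ℕ => n * c)
      (fun m n hmn => by exact_mod_cast mul_right_cancel₀ hc hmn) fun n => ?_)
  simpa using hp.nat_mul_eq n

end Polynomial

theorem stmt_7 (P : Polynomial ℝ) (hP : 3 ≤ P.natDegree) (ζ : ℝ) (hζ : ζ ≠ 0) :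
    ¬ ∃ p2 p3 p4 p5 p6 : Polynomial ℝ, ∀ x y z : ℝ,
        P.eval x - P.eval (x + ζ) =
          p2.eval (y - z) - p3.eval (x + z) - p4.eval (x - z)
            - p5.eval (x + y + Real.sqrt 2 * z) - p6.eval (x + y - Real.sqrt 2 * z) := by
  rintro ⟨p2, p3, p4, p5, p6, h⟩
  let p : Fin 7 → ℝ[X] := ![P, P, p2, p3, p4, p5, p6]
  let c : Fin 7 → ℝ := ![1, -1, -1, 1, 1, 1, 1]
  let α : Fin 7 → ℝ := ![1, 1, 0, 1, 1, 1, 1]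
  let β : Fin 7 → ℝ := ![0, 0, 1, 0, 0, 1, 1]
  let γ : Fin 7 → ℝ := ![0, 0, -1, 1, -1, Real.sqrt 2, -Real.sqrt 2]
  let δ : Fin 7 → ℝ := ![0, ζ, 0, 0, 0, 0, 0]
  have hsum (x y z : ℝ) :
      ∑ i, c i * (p i).eval (δ i + α i * x + β i * y + γ i * z) = 0 := by
    simp [Fin.sum_univ_succ, p, c, α, β, γ, δ, add_comm ζ x]
    linear_combination h x y z
  have hper : Function.Periodic (derivative (derivative P)).eval ζ := fun x => by
    have hx := sum_mul_sq_eval_derivative_derivative_eq_zero Finset.univ c α δ p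
      (fun t => by simpa only [mul_zero, add_zero] using hsum t 0 0) x
    have hy := sum_mul_sq_eval_derivative_derivative_eq_zero Finset.univ c β
      (fun i => δ i + α i * x) p
      (fun t => by simpa only [mul_zero, add_zero] using hsum x t 0) 0
    have hz := sum_mul_sq_eval_derivative_derivative_eq_zero Finset.univ c γ
      (fun i => δ i + α i * x) p
      (fun t => by simpa only [mul_zero, add_zero] using hsum x 0 t) 0
    have hs2 : Real.sqrt 2 ^ 2 = 2 := Real.sq_sqrt zero_le_two
    simp [Fin.sum_univ_succ, p, c, α, β, γ, δ, hs2, add_comm ζ x] at hx hy hz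
    -- `α i ^ 2 + β i ^ 2 - γ i ^ 2` vanishes except at the two `P` terms
    linear_combination hz - hx - hy
  have hdeg : (derivative (derivative P)).natDegree = 0 := by
    rw [eq_C_of_periodic _ hper hζ, natDegree_C]
  simp only [natDegree_derivative] at hdeg
  omega
end

section
/- For every ζ ≥ 1, there are no single-variable real polynomials p2, p3, p4, p5, p6 satisfying, for all real x, y, z: x^2 y^2 - (x+ζ)^2 y^2 = p2(y-z) + p3(x+z) + p4(x-z) + p5(x+y+\sqrt{2}z) + p6(x+y-\sqrt{2}z). -/
/-!
Take the forward differences along `a = (1, -1, 0)`, `b = (0, 1, 0)` and `c = (0, 1, 1)`, the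
discrete analogue of `(∂_y + ∂_z) ∂_y (∂_x - ∂_y)`. Each of the five linear forms vanishes on one
of these directions, so `Δ_a Δ_b Δ_c` kills every summand on the right, for arbitrary functions
in place of `p2, …, p6`; on the left it gives `-4ζ` at the origin.
-/

open Polynomial fwdDiff

section

variable {E F G : Type*} [AddCommMonoid E] [AddCommMonoid F] [AddCommGroup G]

theorem fwdDiff_comp_addMonoidHom (ℓ : E →+ F) (g : F → G) (h : E) :
    Δ_[h] (g ∘ ℓ) = Δ_[ℓ h] g ∘ ℓ := by
  ext v
  simp [fwdDiff]

theorem fwdDiff_zero_left (f : F → G) : Δ_[0] f = 0 := by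
  ext
  simp [fwdDiff]

theorem fwdDiff_zero_right (h : F) : Δ_[h] (0 : F → G) = 0 := by
  ext
  simp [fwdDiff]

theorem fwdDiff_fwdDiff_fwdDiff_comp_eq_zero (ℓ : E →+ F) (g : F → G) {a b c : E}
    (h : ℓ a = 0 ∨ ℓ b = 0 ∨ ℓ c = 0) : Δ_[a] (Δ_[b] (Δ_[c] (g ∘ ℓ))) = 0 := by
  simp only [fwdDiff_comp_addMonoidHom]
  rcases h with h | h | h <;> simp [h, fwdDiff_zero_left, fwdDiff_zero_right]

end

def linForm (α β γ : ℝ) : ℝ × ℝ × ℝ →+ ℝ :=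
  AddMonoidHom.mk' (fun v ↦ α * v.1 + β * v.2.1 + γ * v.2.2) fun u v ↦ by
    simp only [Prod.fst_add, Prod.snd_add]
    ring

@[simp]
theorem linForm_apply (α β γ x y z : ℝ) : linForm α β γ (x, y, z) = α * x + β * y + γ * z := rfl

theorem fwdDiff_three_sq_mul_sq_sub (ζ : ℝ) :
    Δ_[((1 : ℝ), (-1 : ℝ), (0 : ℝ))] (Δ_[(0, 1, 0)] (Δ_[(0, 1, 1)]
      (fun v : ℝ × ℝ × ℝ ↦ v.1 ^ 2 * v.2.1 ^ 2 - (v.1 + ζ) ^ 2 * v.2.1 ^ 2))) 0 = -4 * ζ := by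
  simp only [fwdDiff, Prod.fst_add, Prod.snd_add, Prod.fst_zero, Prod.snd_zero]
  ring

theorem not_exists_ridge_decomposition (ζ : ℝ) (hζ : ζ ≠ 0) :
    ¬ ∃ g2 g3 g4 g5 g6 : ℝ → ℝ, ∀ x y z : ℝ,
        x ^ 2 * y ^ 2 - (x + ζ) ^ 2 * y ^ 2 =
          g2 (y - z) + g3 (x + z) + g4 (x - z)
            + g5 (x + y + Real.sqrt 2 * z) + g6 (x + y - Real.sqrt 2 * z) := by
  rintro ⟨g2, g3, g4, g5, g6, H⟩
  have hF : (fun v : ℝ × ℝ × ℝ ↦ v.1 ^ 2 * v.2.1 ^ 2 - (v.1 + ζ) ^ 2 * v.2.1 ^ 2) =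
      g2 ∘ linForm 0 1 (-1) + g3 ∘ linForm 1 0 1 + g4 ∘ linForm 1 0 (-1)
        + g5 ∘ linForm 1 1 (Real.sqrt 2) + g6 ∘ linForm 1 1 (-Real.sqrt 2) := by
    funext ⟨x, y, z⟩
    simp [H x y z, sub_eq_add_neg]
  have key := fwdDiff_three_sq_mul_sq_sub ζ
  rw [hF] at key
  simp (disch := simp) only [fwdDiff_add, Pi.add_apply, fwdDiff_fwdDiff_fwdDiff_comp_eq_zero,
    Pi.zero_apply, add_zero] at key
  exact hζ (by linarith)

theorem stmt_9 (ζ : ℝ) (hζ : 1 ≤ ζ) :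
    ¬ ∃ p2 p3 p4 p5 p6 : Polynomial ℝ, ∀ x y z : ℝ,
        x^2*y^2 - (x + ζ)^2*y^2 =
          p2.eval (y - z) + p3.eval (x + z) + p4.eval (x - z)
            + p5.eval (x + y + Real.sqrt 2 * z) + p6.eval (x + y - Real.sqrt 2 * z) := by
  rintro ⟨p2, p3, p4, p5, p6, H⟩
  exact not_exists_ridge_decomposition ζ (by linarith : 0 < ζ).ne'
    ⟨(eval · p2), (eval · p3), (eval · p4), (eval · p5), (eval · p6), H⟩
end

section
/- There exist no single-variable real polynomials q1, q2, q3 such that x^2 y = q1(x) + q2(y) + q3(x+y) for all real x, y; that is, the polynomial x^2 y is nondegenerate with respect to the projections (x,y) ↦ x, y, x+y. -/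
/-!
The operator `Δₓ Δᵧ (Δₓ - Δᵧ)` built from unit forward differences kills every function of `x`
alone, of `y` alone and of `x + y` alone, but sends `x ^ 2 * y` to the constant `2`.
-/

open Polynomial

namespace SumOfProjections

variable {R : Type*} [CommRing R]

def diffX (f : R → R → R) (x y : R) : R := f (x + 1) y - f x y

def diffY (f : R → R → R) (x y : R) : R := f x (y + 1) - f x y

def tripleDiff (f : R → R → R) : R → R → R := diffX (diffY (diffX f - diffY f))

theorem tripleDiff_add (f g : R → R → R) : tripleDiff (f + g) = tripleDiff f + tripleDiff g := by
  funext x y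
  simp only [tripleDiff, diffX, diffY, Pi.add_apply, Pi.sub_apply]
  ring

theorem tripleDiff_comp_fst (g : R → R) : tripleDiff (fun x _ => g x) = 0 := by
  funext x y
  simp only [tripleDiff, diffX, diffY, Pi.sub_apply, Pi.zero_apply]
  ring

theorem tripleDiff_comp_snd (g : R → R) : tripleDiff (fun _ y => g y) = 0 := by
  funext x y
  simp only [tripleDiff, diffX, diffY, Pi.sub_apply, Pi.zero_apply]
  ring

theorem tripleDiff_comp_add (g : R → R) : tripleDiff (fun x y => g (x + y)) = 0 := by
  have hxy : diffX (fun x y => g (x + y)) = diffY (fun x y => g (x + y)) := by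
    funext x y
    simp only [diffX, diffY, add_right_comm, add_assoc]
  funext x y
  simp only [tripleDiff, hxy, sub_self, diffX, diffY, Pi.zero_apply]

theorem tripleDiff_sq_mul (x y : R) : tripleDiff (fun x y => x ^ 2 * y) x y = 2 := by
  simp only [tripleDiff, diffX, diffY, Pi.sub_apply]
  ring

theorem not_exists_sq_mul_eq_sum_of_projections (h2 : (2 : R) ≠ 0) :
    ¬ ∃ g₁ g₂ g₃ : R → R, ∀ x y : R, x ^ 2 * y = g₁ x + g₂ y + g₃ (x + y) := by
  rintro ⟨g₁, g₂, g₃, h⟩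
  have hf : (fun x y : R => x ^ 2 * y) =
      (fun x _ => g₁ x) + (fun _ y => g₂ y) + (fun x y => g₃ (x + y)) := by
    funext x y
    exact h x y
  have := congrArg (tripleDiff · 0 0) hf
  simp only [tripleDiff_add, tripleDiff_comp_fst, tripleDiff_comp_snd, tripleDiff_comp_add,
    tripleDiff_sq_mul, add_zero, Pi.zero_apply] at this
  exact h2 this

end SumOfProjections

theorem stmt_12 :
    ¬ ∃ q1 q2 q3 : Polynomial ℝ, ∀ x y : ℝ,
        x^2*y = q1.eval x + q2.eval y + q3.eval (x + y) := by
  rintro ⟨q1, q2, q3, h⟩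
  exact SumOfProjections.not_exists_sq_mul_eq_sum_of_projections two_ne_zero
    ⟨q1.eval, q2.eval, q3.eval, h⟩
end

section
/- The six vectors v1=(0,1,1), v2=(0,1,-1), v3=(1,0,1), v4=(1,0,-1), v5=(1,1,\sqrt{2}), v6=(1,1,-\sqrt{2}) in ℝ^3 are in general position: every subcollection of k of them spans a subspace of dimension min(k,3). -/
/-!
If every at most `n`-element subfamily of a family in an `n`-dimensional space is linearly
independent, then any `k` of its vectors span a space of dimension `min k n`: the span contains
that of an independent `min k n`-element subfamily and has dimension at most `k` and at most `n`.
For the six vectors, each determinant of three distinct ones has the form `a + b √2` with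
integers `a, b` not both zero, hence is nonzero.
-/

/-- The six light-cone vectors. -/
noncomputable def lightVecs : Fin 6 → (Fin 3 → ℝ) :=
  ![![0, 1, 1], ![0, 1, -1], ![1, 0, 1], ![1, 0, -1],
    ![1, 1, Real.sqrt 2], ![1, 1, -Real.sqrt 2]]

open Module Submodule

section

variable {ι K V : Type*} [Field K] [AddCommGroup V] [Module K V]

theorem LinearIndepOn.finrank_span_image {v : ι → V} {s : Finset ι}
    (hv : LinearIndepOn K v (s : Set ι)) : finrank K (span K (v '' s)) = s.card := by
  rw [Set.image_eq_range, finrank_span_eq_card hv]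
  simp

theorem finrank_span_image_le_card (v : ι → V) (s : Finset ι) :
    finrank K (span K (v '' s)) ≤ s.card := by
  classical
  rw [← Finset.coe_image]
  exact (finrank_span_finset_le_card _).trans Finset.card_image_le

theorem finrank_span_image_eq_min [FiniteDimensional K V] {v : ι → V}
    (hv : ∀ t : Finset ι, t.card ≤ finrank K V → LinearIndepOn K v (t : Set ι))
    (s : Finset ι) : finrank K (span K (v '' s)) = min s.card (finrank K V) := by
  obtain ⟨t, hts, ht⟩ := s.exists_subset_card_eq (min_le_left s.card (finrank K V))
  have hlower : min s.card (finrank K V) ≤ finrank K (span K (v '' s)) :=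
    calc min s.card (finrank K V) = finrank K (span K (v '' t)) :=
          ((hv t (ht ▸ min_le_right _ _)).finrank_span_image.trans ht).symm
      _ ≤ finrank K (span K (v '' s)) :=
          Submodule.finrank_mono (span_mono (Set.image_mono (by exact_mod_cast hts)))
  exact le_antisymm (le_min (finrank_span_image_le_card v s) (Submodule.finrank_le _)) hlower

end

theorem lightVecs_det_ne_zero {i j k : Fin 6} (hij : i ≠ j) (hik : i ≠ k) (hjk : j ≠ k) :
    (Matrix.of (lightVecs ∘ ![i, j, k])).det ≠ 0 := by
  have hsq : Real.sqrt 2 ^ 2 = 2 := Real.sq_sqrt zero_le_two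
  have hpos : 0 < Real.sqrt 2 := Real.sqrt_pos.2 zero_lt_two
  fin_cases i <;> fin_cases j <;> fin_cases k <;>
    first
    | exact absurd rfl hij
    | exact absurd rfl hik
    | exact absurd rfl hjk
    | (simp [Matrix.det_fin_three, lightVecs] <;> nlinarith)

theorem lightVecs_linearIndepOn_triple {i j k : Fin 6} (hij : i ≠ j) (hik : i ≠ k)
    (hjk : j ≠ k) : LinearIndepOn ℝ lightVecs ({i, j, k} : Set (Fin 6)) := by
  have hinj : Function.Injective ![i, j, k] := by
    intro a b; fin_cases a <;> fin_cases b <;> simp_all [eq_comm]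
  have hrange : Set.range ![i, j, k] = {i, j, k} := by
    simp only [Matrix.range_cons, Matrix.range_empty, Set.union_empty, Set.singleton_union]
  rw [← hrange, linearIndepOn_range_iff hinj]
  exact Matrix.linearIndependent_rows_of_det_ne_zero (lightVecs_det_ne_zero hij hik hjk)

theorem lightVecs_linearIndepOn_of_card_le_three {t : Finset (Fin 6)} (ht : t.card ≤ 3) :
    LinearIndepOn ℝ lightVecs (t : Set (Fin 6)) := by
  obtain ⟨u, htu, -, hu⟩ := Finset.exists_subsuperset_card_eq t.subset_univ ht (by simp)
  obtain ⟨i, j, k, hij, hik, hjk, rfl⟩ := Finset.card_eq_three.1 hu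
  refine (lightVecs_linearIndepOn_triple hij hik hjk).mono ?_
  simpa only [Finset.coe_insert, Finset.coe_singleton] using Finset.coe_subset.2 htu

theorem stmt_14 :
    ∀ s : Finset (Fin 6),
      Module.finrank ℝ (Submodule.span ℝ (lightVecs '' ↑s)) = min s.card 3 := by
  intro s
  have hdim : finrank ℝ (Fin 3 → ℝ) = 3 := Module.finrank_fin_fun ℝ
  have hgen := finrank_span_image_eq_min
    (fun t ht ↦ lightVecs_linearIndepOn_of_card_le_three (hdim ▸ ht)) s
  rwa [hdim] at hgen
end

section
/- There do not exist single-variable real polynomials p1,...,p6 such that x^3 = p1(y+z) + p2(y-z) + p3(x+z) + p4(x-z) + p5(x+y+\sqrt{2}z) + p6(x+y-\sqrt{2}z) for all real x, y, z; i.e., P(x,y,z) = x^3 is nondegenerate with respect to the six light-cone projections. -/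
/-!
Let `□ = ∂ₓ² + ∂ᵧ² - ∂_z²`. For a vector `v` with `□`-null symbol, `v₁² + v₂² - v₃² = 0`, the chain
rule gives `□ (p (v · x)) = (v₁² + v₂² - v₃²) p''(v · x) = 0`, and all six directions
`(0,1,±1)`, `(1,0,±1)`, `(1,1,±√2)` are null. So `□` kills the right-hand side, while `□ (x³) = 6x ≠ 0`.
The computation is done on `MvPolynomial (Fin 3) ℝ`, where an identity of polynomial functions over
the infinite field `ℝ` is an identity of polynomials.
-/

open Polynomial

namespace MvPolynomial

variable {σ R : Type*} [Fintype σ] [CommSemiring R]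

noncomputable def linearForm (v : σ → R) : MvPolynomial σ R := ∑ i, C (v i) * X i

noncomputable def weightedLaplacian (q : σ → R) : MvPolynomial σ R →ₗ[R] MvPolynomial σ R :=
  ∑ i, q i • ((pderiv i).toLinearMap ∘ₗ (pderiv i).toLinearMap)

lemma weightedLaplacian_apply (q : σ → R) (f : MvPolynomial σ R) :
    weightedLaplacian q f = ∑ i, C (q i) * pderiv i (pderiv i f) := by
  simp [weightedLaplacian, LinearMap.sum_apply, smul_eq_C_mul]

lemma pderiv_linearForm (v : σ → R) (i : σ) : pderiv i (linearForm v) = C (v i) := by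
  classical
  simp [linearForm, pderiv_X, Pi.single_apply]

lemma pderiv_aeval_linearForm (v : σ → R) (p : R[X]) (i : σ) :
    pderiv i (Polynomial.aeval (linearForm v) p)
      = C (v i) * Polynomial.aeval (linearForm v) (derivative p) := by
  rw [Derivation.map_aeval, pderiv_linearForm, smul_eq_mul, mul_comm]

lemma weightedLaplacian_aeval_linearForm (q v : σ → R) (p : R[X]) :
    weightedLaplacian q (Polynomial.aeval (linearForm v) p)
      = C (∑ i, q i * v i ^ 2) * Polynomial.aeval (linearForm v) (derivative (derivative p)) := by
  simp only [weightedLaplacian_apply, pderiv_aeval_linearForm, pderiv_C_mul, map_sum,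
    Finset.sum_mul]
  refine Finset.sum_congr rfl fun i _ => ?_
  simp only [map_mul, map_pow]
  ring

lemma weightedLaplacian_aeval_linearForm_of_isotropic {q v : σ → R}
    (hv : ∑ i, q i * v i ^ 2 = 0) (p : R[X]) :
    weightedLaplacian q (Polynomial.aeval (linearForm v) p) = 0 := by
  rw [weightedLaplacian_aeval_linearForm, hv, C_0, zero_mul]

lemma eval_aeval_linearForm (v x : σ → R) (p : R[X]) :
    eval x (Polynomial.aeval (linearForm v) p) = p.eval (∑ i, v i * x i) := by
  rw [← aeval_eq_eval, ← Polynomial.aeval_algHom_apply, Polynomial.coe_aeval_eq_eval]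
  simp [linearForm]

end MvPolynomial

open MvPolynomial

noncomputable def dAlembertian : MvPolynomial (Fin 3) ℝ →ₗ[ℝ] MvPolynomial (Fin 3) ℝ :=
  weightedLaplacian ![1, 1, -1]

lemma dAlembertian_aeval_linearForm {a b c : ℝ} (h : a ^ 2 + b ^ 2 = c ^ 2) (p : ℝ[X]) :
    dAlembertian (Polynomial.aeval (linearForm ![a, b, c]) p) = 0 :=
  weightedLaplacian_aeval_linearForm_of_isotropic (by simp [Fin.sum_univ_three, h]) p

lemma dAlembertian_X_zero_pow_three : dAlembertian (X 0 ^ 3) = 6 * X 0 := by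
  simp only [dAlembertian, weightedLaplacian_apply, Fin.sum_univ_three, pderiv_pow, pderiv_mul,
    Derivation.map_natCast, pderiv_X_self]
  simp
  ring

theorem stmt_19 :
    ¬ ∃ p1 p2 p3 p4 p5 p6 : Polynomial ℝ, ∀ x y z : ℝ,
        x^3 =
          p1.eval (y + z) + p2.eval (y - z) + p3.eval (x + z) + p4.eval (x - z)
            + p5.eval (x + y + Real.sqrt 2 * z) + p6.eval (x + y - Real.sqrt 2 * z) := by
  rintro ⟨p1, p2, p3, p4, p5, p6, h⟩
  have hpoly : X 0 ^ 3 =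
      Polynomial.aeval (linearForm ![0, 1, 1]) p1 + Polynomial.aeval (linearForm ![0, 1, -1]) p2
      + Polynomial.aeval (linearForm ![1, 0, 1]) p3 + Polynomial.aeval (linearForm ![1, 0, -1]) p4
      + Polynomial.aeval (linearForm ![1, 1, √2]) p5
      + Polynomial.aeval (linearForm ![1, 1, -√2]) p6 := by
    refine MvPolynomial.funext fun x => ?_
    simpa [eval_aeval_linearForm, Fin.sum_univ_three, sub_eq_add_neg] using h (x 0) (x 1) (x 2)
  have hbox := congrArg dAlembertian hpoly
  simp (disch := norm_num) [dAlembertian_X_zero_pow_three, dAlembertian_aeval_linearForm] at hbox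
end
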